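/- Let H be a complex Hilbert space, let k > 1 be an integer with k < dim H, let X, Y be adjacent k-dimensional subspaces of H, and let S be the 2-dimensional orthogonal complement of X ∩ Y in X + Y. A k-dimensional subspace Z of H with Z ⊆ X + Y is ortho-adjacent to both X and Y if and only if Z = S + W for some (k − 2)-dimensional subspace W of X ∩ Y. -/

import Mathlib

/-!
Write `N = X ⊓ Y` and `S = (X ⊔ Y) ⊓ Nᗮ`. Two subspaces `X`, `Z` are compatible exactly when `Z`
splits as `(X ⊓ Z) ⊔ (Xᗮ ⊓ Z)`: one direction because `P_X` maps `Z` into itself, the other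
because then `P_X P_Z = P_{X ⊓ Z}` is self-adjoint.

If `Z ≤ X ⊔ Y` is ortho-adjacent to `X` and `Y`, the splittings make `Xᗮ ⊓ Z` and `Yᗮ ⊓ Z` lines in
`S`; they meet only in `(X ⊔ Y)ᗮ ⊓ Z = ⊥`, so they span the plane `S`, whence `S ≤ Z` and
`Z = S ⊔ (N ⊓ Z)` by modularity. Conversely, with the line `L = Nᗮ ⊓ X`, the plane `S` is
`L ⊔ (Lᗮ ⊓ S)`, so `S ⊔ W = (W ⊔ L) ⊔ (Lᗮ ⊓ S)` with `W ⊔ L ≤ X` of dimension `k - 1` and the line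
`Lᗮ ⊓ S ≤ Xᗮ`: this is a splitting of `S ⊔ W` along `X` with `(S ⊔ W) ⊓ X = W ⊔ L`.
-/

noncomputable section

open scoped Classical

variable {H : Type*} [NormedAddCommGroup H] [InnerProductSpace ℂ H] [CompleteSpace H]

/-- The orthogonal projection onto `X`, as an operator `H → H` (junk value `0` if the
orthogonal projection onto `X` does not exist; it always exists for finite-dimensional,
and more generally complete, subspaces). -/
noncomputable def projOn (X : Submodule ℂ H) : H →L[ℂ] H :=
  if h : X.HasOrthogonalProjection then
    haveI := h
    X.subtypeL.comp (X.orthogonalProjectionOnto)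
  else 0

/-- Two subspaces of `H` are compatible if their orthogonal projections commute. -/
def Compatible (X Y : Submodule ℂ H) : Prop :=
  projOn X * projOn Y = projOn Y * projOn X

/-- `X` is a `k`-dimensional subspace of `H`. -/
def IsDim (k : ℕ) (X : Submodule ℂ H) : Prop :=
  FiniteDimensional ℂ X ∧ Module.finrank ℂ X = k

/-- Two (distinct) `k`-dimensional subspaces are adjacent if their intersection is
`(k-1)`-dimensional. -/
def AdjacentSub (k : ℕ) (X Y : Submodule ℂ H) : Prop :=
  X ≠ Y ∧ Module.finrank ℂ ↥(X ⊓ Y) = k - 1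

/-- Ortho-adjacency: adjacent and compatible. -/
def OrthoAdjacent (k : ℕ) (X Y : Submodule ℂ H) : Prop :=
  AdjacentSub k X Y ∧ Compatible X Y

/-- The ortho-Grassmann graph `Γ⊥_k(H)` on the `k`-dimensional subspaces of `H`:
two `k`-dimensional subspaces are connected by an edge if they are ortho-adjacent. -/
def orthoGrassmannGraph (H : Type*) [NormedAddCommGroup H] [InnerProductSpace ℂ H]
    [CompleteSpace H] (k : ℕ) : SimpleGraph {X : Submodule ℂ H // IsDim k X} where
  Adj X Y := OrthoAdjacent k X.1 Y.1
  symm := ⟨by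
    rintro X Y ⟨⟨hne, hdim⟩, hc⟩
    refine ⟨⟨hne.symm, by rwa [inf_comm]⟩, ?_⟩
    unfold Compatible at hc ⊢
    exact hc.symm⟩
  loopless := ⟨fun X h => h.1.1 rfl⟩

/-- The Grassmann graph `Γ_k(H)` on the `k`-dimensional subspaces of `H`:
two `k`-dimensional subspaces are connected by an edge if they are adjacent. -/
def grassmannGraph (H : Type*) [NormedAddCommGroup H] [InnerProductSpace ℂ H]
    [CompleteSpace H] (k : ℕ) : SimpleGraph {X : Submodule ℂ H // IsDim k X} where
  Adj X Y := AdjacentSub k X.1 Y.1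
  symm := ⟨by
    rintro X Y ⟨hne, hdim⟩
    exact ⟨hne.symm, by rwa [inf_comm]⟩⟩
  loopless := ⟨fun X h => h.1 rfl⟩

open Module

lemma Submodule.finrank_sup_of_disjoint {K V : Type*} [DivisionRing K] [AddCommGroup V]
    [Module K V] {s t : Submodule K V} [FiniteDimensional K s] [FiniteDimensional K t]
    (h : Disjoint s t) : finrank K ↥(s ⊔ t) = finrank K s + finrank K t := by
  have := Submodule.finrank_sup_add_finrank_inf_eq s t
  rwa [h.eq_bot, finrank_bot, add_zero] at this

section Compatible

variable {E : Type*} [NormedAddCommGroup E] [InnerProductSpace ℂ E] {X Z : Submodule ℂ E}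

lemma projOn_eq_starProjection (X : Submodule ℂ E) [h : X.HasOrthogonalProjection] :
    projOn X = X.starProjection :=
  dif_pos h

lemma Compatible.symm (h : Compatible X Z) : Compatible Z X :=
  Eq.symm h

lemma compatible_iff_commute [X.HasOrthogonalProjection] [Z.HasOrthogonalProjection] :
    Compatible X Z ↔ Commute X.starProjection Z.starProjection := by
  rw [Compatible, projOn_eq_starProjection, projOn_eq_starProjection]
  rfl

lemma Compatible.inf_sup_orthogonal_inf [X.HasOrthogonalProjection] [Z.HasOrthogonalProjection]
    (h : Compatible X Z) : X ⊓ Z ⊔ Xᗮ ⊓ Z = Z := by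
  refine le_antisymm (sup_le inf_le_right inf_le_right) fun z hz => ?_
  have hPz : X.starProjection z ∈ Z := by
    have hcomm := congr($((compatible_iff_commute.1 h).eq) z)
    simp only [mul_apply_eq_comp, Z.starProjection_eq_self_iff.2 hz] at hcomm
    exact hcomm ▸ Z.starProjection_apply_mem _
  rw [← add_sub_cancel (X.starProjection z) z]
  exact Submodule.add_mem_sup ⟨X.starProjection_apply_mem z, hPz⟩
    ⟨X.sub_starProjection_mem_orthogonal z, sub_mem hz hPz⟩

lemma starProjection_mul_starProjection_of_inf_sup_orthogonal_inf [X.HasOrthogonalProjection]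
    [Z.HasOrthogonalProjection] [(X ⊓ Z).HasOrthogonalProjection] (hZ : X ⊓ Z ⊔ Xᗮ ⊓ Z = Z) :
    X.starProjection * Z.starProjection = (X ⊓ Z).starProjection := by
  ext v
  obtain ⟨a, ha, b, hb, hab⟩ := Submodule.mem_sup.1 (hZ.ge (Z.starProjection_apply_mem v))
  have hPZ : X.starProjection (Z.starProjection v) = a := by
    rw [← hab, map_add, X.starProjection_eq_self_iff.2 ha.1,
      X.starProjection_apply_eq_zero_iff.2 hb.1, add_zero]
  rw [mul_apply_eq_comp, hPZ]
  refine (Submodule.eq_starProjection_of_mem_orthogonal ha ?_).symm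
  have hsplit : v - a = (v - Z.starProjection v) + b := by rw [← hab]; abel
  rw [hsplit]
  exact add_mem (Submodule.orthogonal_le inf_le_right (Z.sub_starProjection_mem_orthogonal v))
    (Submodule.orthogonal_le inf_le_left hb.1)

lemma compatible_iff_inf_sup_orthogonal_inf [CompleteSpace E] [X.HasOrthogonalProjection]
    [Z.HasOrthogonalProjection] [(X ⊓ Z).HasOrthogonalProjection] :
    Compatible X Z ↔ X ⊓ Z ⊔ Xᗮ ⊓ Z = Z := by
  refine ⟨Compatible.inf_sup_orthogonal_inf, fun hZ => ?_⟩
  rw [compatible_iff_commute, IsSelfAdjoint.commute_iff (isSelfAdjoint_starProjection X)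
    (isSelfAdjoint_starProjection Z),
    starProjection_mul_starProjection_of_inf_sup_orthogonal_inf hZ]
  exact isSelfAdjoint_starProjection _

lemma Compatible.finrank_inf_add_finrank_orthogonal_inf [X.HasOrthogonalProjection]
    [FiniteDimensional ℂ Z] (h : Compatible X Z) :
    finrank ℂ ↥(X ⊓ Z) + finrank ℂ ↥(Xᗮ ⊓ Z) = finrank ℂ Z := by
  rw [← Submodule.finrank_sup_of_disjoint (X.orthogonal_disjoint.mono inf_le_left inf_le_left),
    h.inf_sup_orthogonal_inf]

end Compatible

section Adjacent

variable {E : Type*} [NormedAddCommGroup E] [InnerProductSpace ℂ E] {k : ℕ} {X Y Z : Submodule ℂ E}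

lemma AdjacentSub.finrank_inf_add_one (hX : IsDim k X) (hY : IsDim k Y) (h : AdjacentSub k X Y) :
    finrank ℂ ↥(X ⊓ Y) + 1 = k := by
  suffices k ≠ 0 by have := h.2; omega
  rintro rfl
  have := hX.1
  have := hY.1
  exact h.1 ((Submodule.finrank_eq_zero.1 hX.2).trans (Submodule.finrank_eq_zero.1 hY.2).symm)

lemma AdjacentSub.finrank_sup (hX : IsDim k X) (hY : IsDim k Y) (h : AdjacentSub k X Y) :
    finrank ℂ ↥(X ⊔ Y) = k + 1 := by
  have := hX.1
  have := hY.1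
  have hsum := Submodule.finrank_sup_add_finrank_inf_eq X Y
  have hinf := h.finrank_inf_add_one hX hY
  rw [hX.2, hY.2] at hsum
  omega

lemma AdjacentSub.finrank_sup_inf_orthogonal (hX : IsDim k X) (hY : IsDim k Y)
    (h : AdjacentSub k X Y) : finrank ℂ ↥((X ⊔ Y) ⊓ (X ⊓ Y)ᗮ) = 2 := by
  have := hX.1
  have := hY.1
  have hsum := Submodule.finrank_add_inf_finrank_orthogonal
    (inf_le_left.trans le_sup_left : X ⊓ Y ≤ X ⊔ Y)
  have hinf := h.finrank_inf_add_one hX hY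
  rw [inf_comm (X ⊓ Y)ᗮ, h.finrank_sup hX hY] at hsum
  omega

lemma OrthoAdjacent.finrank_orthogonal_inf (hZ : IsDim k Z) (hX : IsDim k X)
    (h : OrthoAdjacent k Z X) : finrank ℂ ↥(Xᗮ ⊓ Z) = 1 := by
  have := hX.1
  have := hZ.1
  have hsum := h.2.symm.finrank_inf_add_finrank_orthogonal_inf
  have hinf := h.1.finrank_inf_add_one hZ hX
  rw [inf_comm Z] at hinf
  rw [hZ.2] at hsum
  omega

lemma orthoAdjacent_sup_of_le_orthogonal [CompleteSpace E] {A B : Submodule ℂ E}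
    [FiniteDimensional ℂ X] [FiniteDimensional ℂ B] (hA : A ≤ X) (hB : B ≤ Xᗮ) (hB0 : B ≠ ⊥)
    (hAk : finrank ℂ A = k - 1) : OrthoAdjacent k (A ⊔ B) X := by
  have := Submodule.finiteDimensional_of_le hA
  have hBX : B ⊓ X = ⊥ := (X.orthogonal_disjoint.symm.mono_left hB).eq_bot
  refine ⟨⟨fun hZX => hB0 ?_, ?_⟩, Compatible.symm ?_⟩
  · rw [← hBX, inf_eq_left.2 (hZX ▸ le_sup_right)]
  · rw [sup_inf_assoc_of_le B hA, hBX, sup_bot_eq, hAk]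
  · refine compatible_iff_inf_sup_orthogonal_inf.2 (le_antisymm ?_ ?_)
    · exact sup_le inf_le_right inf_le_right
    · exact sup_le_sup (le_inf hA le_sup_left) (le_inf hB le_sup_right)

lemma orthoAdjacent_inf_orthogonal_sup [CompleteSpace E] {N M W : Submodule ℂ E}
    [FiniteDimensional ℂ M] (hk : 1 < k) (hNX : N ≤ X) (hXM : X ≤ M) (hN : finrank ℂ N = k - 1)
    (hX : finrank ℂ X = k) (hM : finrank ℂ M = k + 1) (hWN : W ≤ N) (hW : finrank ℂ W = k - 2) :
    OrthoAdjacent k (M ⊓ Nᗮ ⊔ W) X := by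
  have := Submodule.finiteDimensional_of_le hXM
  have := Submodule.finiteDimensional_of_le hNX
  have := Submodule.finiteDimensional_of_le hWN
  have hLS : Nᗮ ⊓ X ≤ M ⊓ Nᗮ := le_inf (inf_le_right.trans hXM) inf_le_left
  have hL : finrank ℂ ↥(Nᗮ ⊓ X) = 1 := by
    have hNL := Submodule.finrank_add_inf_finrank_orthogonal hNX
    omega
  have hB : finrank ℂ ↥((Nᗮ ⊓ X)ᗮ ⊓ (M ⊓ Nᗮ)) = 1 := by
    have hLB := Submodule.finrank_add_inf_finrank_orthogonal hLS
    have hNS := Submodule.finrank_add_inf_finrank_orthogonal (hNX.trans hXM)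
    rw [inf_comm Nᗮ] at hNS
    omega
  have hBX : (Nᗮ ⊓ X)ᗮ ⊓ (M ⊓ Nᗮ) ≤ Xᗮ := by
    have hXdec : (N ⊔ Nᗮ ⊓ X)ᗮ = Xᗮ := by
      rw [Submodule.sup_orthogonal_inf_of_hasOrthogonalProjection hNX]
    rw [← hXdec, ← Submodule.inf_orthogonal]
    exact le_inf (inf_le_right.trans inf_le_right) inf_le_left
  have hWL : finrank ℂ ↥(W ⊔ (Nᗮ ⊓ X)) = k - 1 := by
    rw [Submodule.finrank_sup_of_disjoint (N.orthogonal_disjoint.mono hWN inf_le_left), hW, hL]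
    omega
  have hsplit : M ⊓ Nᗮ ⊔ W = W ⊔ (Nᗮ ⊓ X) ⊔ (Nᗮ ⊓ X)ᗮ ⊓ (M ⊓ Nᗮ) := by
    conv_lhs => rw [← Submodule.sup_orthogonal_inf_of_hasOrthogonalProjection hLS]
    ac_rfl
  rw [hsplit]
  refine orthoAdjacent_sup_of_le_orthogonal (sup_le (hWN.trans hNX) inf_le_right) hBX ?_ hWL
  intro h0
  rw [h0, finrank_bot] at hB
  exact zero_ne_one hB

lemma inf_orthogonal_le_of_orthoAdjacent (hX : IsDim k X) (hY : IsDim k Y) (hZ : IsDim k Z)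
    (hXY : AdjacentSub k X Y) (hZle : Z ≤ X ⊔ Y) (hZX : OrthoAdjacent k Z X)
    (hZY : OrthoAdjacent k Z Y) : (X ⊔ Y) ⊓ (X ⊓ Y)ᗮ ≤ Z := by
  have := hX.1
  have := hY.1
  have := hZ.1
  have hdisj : Disjoint (Xᗮ ⊓ Z) (Yᗮ ⊓ Z) := by
    rw [disjoint_iff_inf_le, ← (X ⊔ Y).inf_orthogonal_eq_bot, ← Submodule.inf_orthogonal]
    exact le_inf (inf_le_left.trans (inf_le_right.trans hZle))
      (inf_le_inf inf_le_left inf_le_left)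
  have hspan : Xᗮ ⊓ Z ⊔ Yᗮ ⊓ Z = (X ⊔ Y) ⊓ (X ⊓ Y)ᗮ := by
    refine Submodule.eq_of_le_of_finrank_eq (sup_le ?_ ?_) ?_
    · exact le_inf (inf_le_right.trans hZle)
        (inf_le_left.trans (Submodule.orthogonal_le inf_le_left))
    · exact le_inf (inf_le_right.trans hZle)
        (inf_le_left.trans (Submodule.orthogonal_le inf_le_right))
    · rw [Submodule.finrank_sup_of_disjoint hdisj, hZX.finrank_orthogonal_inf hZ hX,
        hZY.finrank_orthogonal_inf hZ hY, hXY.finrank_sup_inf_orthogonal hX hY]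
  exact hspan ▸ sup_le inf_le_right inf_le_right

end Adjacent

theorem orthoAdjacent_to_both_iff_of_le_sup_general
    (k : ℕ) (hk : 1 < k)
    (X Y Z : Submodule ℂ H) (hX : IsDim k X) (hY : IsDim k Y) (hZ : IsDim k Z)
    (hXY : AdjacentSub k X Y) (hZle : Z ≤ X ⊔ Y) :
    (OrthoAdjacent k Z X ∧ OrthoAdjacent k Z Y) ↔
      ∃ W : Submodule ℂ H, IsDim (k - 2) W ∧ W ≤ X ⊓ Y ∧
        Z = ((X ⊔ Y) ⊓ (X ⊓ Y)ᗮ) ⊔ W := by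
  have := hX.1
  have := hY.1
  have hM := hXY.finrank_sup hX hY
  constructor
  · rintro ⟨hZX, hZY⟩
    have hSZ := inf_orthogonal_le_of_orthoAdjacent hX hY hZ hXY hZle hZX hZY
    have hZeq : Z = (X ⊔ Y) ⊓ (X ⊓ Y)ᗮ ⊔ X ⊓ Y ⊓ Z := by
      rw [← sup_inf_assoc_of_le _ hSZ, sup_comm, inf_comm (X ⊔ Y),
        Submodule.sup_orthogonal_inf_of_hasOrthogonalProjection (inf_le_left.trans le_sup_left),
        inf_eq_right.2 hZle]
    refine ⟨X ⊓ Y ⊓ Z, ⟨inferInstance, ?_⟩, inf_le_left, hZeq⟩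
    have hdim := Submodule.finrank_sup_of_disjoint (s := (X ⊔ Y) ⊓ (X ⊓ Y)ᗮ) (t := X ⊓ Y ⊓ Z)
      ((X ⊓ Y).orthogonal_disjoint.symm.mono inf_le_right inf_le_left)
    rw [← hZeq, hZ.2, hXY.finrank_sup_inf_orthogonal hX hY] at hdim
    omega
  · rintro ⟨W, ⟨-, hW⟩, hWN, rfl⟩
    exact ⟨orthoAdjacent_inf_orthogonal_sup hk inf_le_left le_sup_left hXY.2 hX.2 hM hWN hW,
      orthoAdjacent_inf_orthogonal_sup hk inf_le_right le_sup_right hXY.2 hY.2 hM hWN hW⟩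

/-- Let `X, Y` be adjacent `k`-dimensional subspaces of `H` with `1 < k < dim H`, and let
`(X + Y) ∩ (X ∩ Y)ᗮ` be the (`2`-dimensional) orthogonal complement of `X ∩ Y` in `X + Y`.
A `k`-dimensional subspace `Z ⊆ X + Y` is ortho-adjacent to both `X, Y` if and only if
`Z = S + W` for some `(k-2)`-dimensional subspace `W ⊆ X ∩ Y`. -/
theorem orthoAdjacent_to_both_iff_of_le_sup
    (k : ℕ) (hk : 1 < k) (hkH : (k : Cardinal) < Module.rank ℂ H)
    (X Y Z : Submodule ℂ H) (hX : IsDim k X) (hY : IsDim k Y) (hZ : IsDim k Z)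
    (hXY : AdjacentSub k X Y) (hZle : Z ≤ X ⊔ Y) :
    (OrthoAdjacent k Z X ∧ OrthoAdjacent k Z Y) ↔
      ∃ W : Submodule ℂ H, IsDim (k - 2) W ∧ W ≤ X ⊓ Y ∧
        Z = ((X ⊔ Y) ⊓ (X ⊓ Y)ᗮ) ⊔ W :=
  orthoAdjacent_to_both_iff_of_le_sup_general k hk X Y Z hX hY hZ hXY hZle

end
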